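/- Let C be a set of r ≥ 3 vertices inducing a cycle in G, and suppose at least one vertex of C has degree greater than 2 in G. Let λ ∈ ℂ satisfy λ^r = 1 and λ² ≠ 1. Then the linear subspace { v : B·v = λ·v and v is supported on C } has dimension at most 1; in particular, an eigenvector of B for λ supported on C, if it exists, is unique up to a scalar multiple. -/

import Mathlib

/-!
For `x ∈ C` the eigen-equation of a vector `v` supported on `C` at a dart `x → y` reads
`μ v(x→y) = ∑ v(z→x)`, the sum over the (at most two) `C`-neighbours `z ≠ y` of `x`.
Pick `u ∈ C` with a neighbour `w ∉ C` and a `C`-neighbour `a`. If `v(a→u) = 0`, the equation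
at `u → w`, where `v(u→w) = 0`, kills the other dart into `u`. Once every dart into `x`
vanishes, so does every dart out of `x` (as `μ ≠ 0`), and for a `C`-neighbour `y` of `x` the
equation at `y → x` kills the remaining dart into `y`. Connectivity of `C` carries this around
the cycle, so `v ↦ v(a→u)` is injective on the eigenspace.
-/

open Matrix Polynomial BigOperators

variable {V : Type*}

/-- The non-backtracking matrix of a graph `G`, indexed by darts (oriented edges):
`B[(k→l),(i→j)] = 1` if `j = k` and `i ≠ l`, else `0`. -/
def nbMatrix [DecidableEq V] (G : SimpleGraph V) : Matrix G.Dart G.Dart ℂ :=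
  fun e f => if f.snd = e.fst ∧ f.fst ≠ e.snd then 1 else 0

/-- A vertex set `C` induces a cycle if the subgraph of `G` induced by `C` is connected and
2-regular (every vertex of `C` has exactly two neighbors inside `C`). -/
def InducesCycle (G : SimpleGraph V) (C : Set V) : Prop :=
  (G.induce C).Connected ∧ ∀ u ∈ C, {w | w ∈ C ∧ G.Adj u w}.ncard = 2

/-- A vector `v` indexed by darts is supported on a vertex set `C` if `v_{k→l} = 0` whenever
`k ∉ C` or `l ∉ C`. -/
def SupportedOn (G : SimpleGraph V) (v : G.Dart → ℂ) (C : Set V) : Prop :=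
  ∀ e : G.Dart, (e.fst ∉ C ∨ e.snd ∉ C) → v e = 0

/-- The subspace of dart-indexed vectors supported on the vertex set `C`. -/
noncomputable def supportedSubmodule (G : SimpleGraph V) (C : Set V) : Submodule ℂ (G.Dart → ℂ) where
  carrier := {v | SupportedOn G v C}
  add_mem' := by
    intro a b ha hb e he
    simp only [Pi.add_apply, ha e he, hb e he, add_zero]
  zero_mem' := by intro e _; rfl
  smul_mem' := by
    intro c a ha e he
    simp only [Pi.smul_apply, ha e he, smul_zero]

lemma SimpleGraph.Preconnected.forall_of_forall_adj {W : Type*} {H : SimpleGraph W}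
    (hH : H.Preconnected) {P : W → Prop} (hstep : ∀ x y, H.Adj x y → P x → P y)
    {u : W} (hu : P u) (y : W) : P y := by
  induction (SimpleGraph.reachable_iff_reflTransGen u y).mp (hH u y) with
  | refl => exact hu
  | tail _ hxy ih => exact hstep _ _ hxy ih

lemma SimpleGraph.exists_adj_notMem_of_ncard_lt_degree {G : SimpleGraph V} {u : V}
    [Fintype (G.neighborSet u)] {C : Set V} (h : {w | w ∈ C ∧ G.Adj u w}.ncard < G.degree u) :
    ∃ w, G.Adj u w ∧ w ∉ C := by
  by_contra! hC
  have hN : {w | w ∈ C ∧ G.Adj u w} = G.neighborSet u :=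
    Set.ext fun w => ⟨And.right, fun hw => ⟨hC w hw, hw⟩⟩
  rw [hN, Set.ncard_eq_toFinset_card', Set.toFinset_card,
    SimpleGraph.card_neighborSet_eq_degree] at h
  exact lt_irrefl _ h

lemma Set.exists_eq_pair_of_ncard_eq_two {α : Type*} {s : Set α} {x : α} (hs : s.ncard = 2)
    (hx : x ∈ s) :
    ∃ z, x ≠ z ∧ s = {x, z} := by
  obtain ⟨a, b, hab, rfl⟩ := Set.ncard_eq_two.mp hs
  rcases hx with rfl | rfl
  · exact ⟨b, hab, rfl⟩
  · exact ⟨a, hab.symm, Set.pair_comm _ _⟩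

lemma SimpleGraph.Dart.fst_eq_or_eq_of_snd_eq {G : SimpleGraph V} {C : Set V} {x y z : V}
    (hy : {w | w ∈ C ∧ G.Adj y w} = {x, z}) {f : G.Dart} (hf : f.snd = y) (hfC : f.fst ∈ C) :
    f.fst = x ∨ f.fst = z := by
  have hmem : f.fst ∈ {w | w ∈ C ∧ G.Adj y w} := ⟨hfC, hf ▸ f.adj.symm⟩
  rwa [hy] at hmem

lemma SupportedOn.forall_snd_eq_zero_of_pair {G : SimpleGraph V} {v : G.Dart → ℂ} {C : Set V}
    (hC : SupportedOn G v C) {x y z : V}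
    (hy : {w | w ∈ C ∧ G.Adj y w} = {x, z}) (hxy : G.Adj x y) (hzy : G.Adj z y)
    (hx : v ⟨(x, y), hxy⟩ = 0) (hz : v ⟨(z, y), hzy⟩ = 0) (f : G.Dart) (hf : f.snd = y) :
    v f = 0 := by
  by_cases hfC : f.fst ∈ C
  · rcases f.fst_eq_or_eq_of_snd_eq hy hf hfC with h | h
    · obtain rfl : f = ⟨(x, y), hxy⟩ := SimpleGraph.Dart.ext _ _ (Prod.ext h hf)
      exact hx
    · obtain rfl : f = ⟨(z, y), hzy⟩ := SimpleGraph.Dart.ext _ _ (Prod.ext h hf)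
      exact hz
  · exact hC f (.inl hfC)

namespace nbMatrix

variable {G : SimpleGraph V} {C : Set V} {v : G.Dart → ℂ}

variable [DecidableEq V] [Fintype G.Dart] {μ : ℂ}

lemma mulVec_apply (v : G.Dart → ℂ) (e : G.Dart) :
    (nbMatrix G *ᵥ v) e = ∑ f with f.snd = e.fst ∧ f.fst ≠ e.snd, v f := by
  simp [nbMatrix, mulVec, dotProduct, Finset.sum_filter]

lemma mul_apply_eq_sum_of_mem_ker (hv : v ∈ LinearMap.ker (nbMatrix G - μ • 1).mulVecLin)
    (e : G.Dart) : μ * v e = ∑ f with f.snd = e.fst ∧ f.fst ≠ e.snd, v f := by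
  have h : nbMatrix G *ᵥ v = μ • v := by
    simpa [sub_mulVec, smul_mulVec, sub_eq_zero] using hv
  rw [← mulVec_apply, h, Pi.smul_apply, smul_eq_mul]

lemma apply_eq_zero_of_forall_snd_eq (hμ : μ ≠ 0)
    (hv : v ∈ LinearMap.ker (nbMatrix G - μ • 1).mulVecLin) {e : G.Dart}
    (hin : ∀ f : G.Dart, f.snd = e.fst → v f = 0) : v e = 0 := by
  have h := mul_apply_eq_sum_of_mem_ker hv e
  rw [Finset.sum_eq_zero fun f hf => hin f (Finset.mem_filter.mp hf).2.1] at h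
  exact (mul_eq_zero.mp h).resolve_left hμ

lemma mul_apply_eq_sum_of_supportedOn (hv : v ∈ LinearMap.ker (nbMatrix G - μ • 1).mulVecLin)
    (hC : SupportedOn G v C) {e : G.Dart} {T : Finset G.Dart}
    (hT : ∀ f ∈ T, f.snd = e.fst ∧ f.fst ≠ e.snd)
    (hcover : ∀ f : G.Dart, f.snd = e.fst → f.fst ≠ e.snd → f.fst ∈ C → f ∈ T) :
    μ * v e = ∑ f ∈ T, v f := by
  rw [mul_apply_eq_sum_of_mem_ker hv e]
  refine (Finset.sum_subset (fun f hf => Finset.mem_filter.mpr ⟨Finset.mem_univ f, hT f hf⟩)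
    fun f hf hfT => hC f (.inl fun hfC => hfT ?_)).symm
  obtain ⟨-, hsnd, hfst⟩ := Finset.mem_filter.mp hf
  exact hcover f hsnd hfst hfC

lemma forall_snd_eq_zero_of_adj_notMem (hv : v ∈ LinearMap.ker (nbMatrix G - μ • 1).mulVecLin)
    (hC : SupportedOn G v C) {u a b w : V} (hu : {w | w ∈ C ∧ G.Adj u w} = {a, b})
    (hab : a ≠ b) (hau : G.Adj a u) (hbu : G.Adj b u) (huw : G.Adj u w) (hw : w ∉ C)
    (ha : v ⟨(a, u), hau⟩ = 0) (f : G.Dart) (hf : f.snd = u) : v f = 0 := by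
  have hsum : μ * v ⟨(u, w), huw⟩ = v ⟨(a, u), hau⟩ + v ⟨(b, u), hbu⟩ := by
    refine (mul_apply_eq_sum_of_supportedOn hv hC ?_ ?_).trans (Finset.sum_pair ?_)
    · have hne : ∀ x ∈ ({a, b} : Set V), x ≠ w := fun x hx hxw =>
        hw (hxw ▸ (show x ∈ {w | w ∈ C ∧ G.Adj u w} from hu ▸ hx).1)
      simp only [Finset.mem_insert, Finset.mem_singleton]
      rintro f (rfl | rfl)
      exacts [⟨rfl, hne a (by simp)⟩, ⟨rfl, hne b (by simp)⟩]
    · intro f hfu _ hfC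
      rcases f.fst_eq_or_eq_of_snd_eq hu hfu hfC with h | h <;>
        simp [SimpleGraph.Dart.ext_iff, Prod.ext_iff, h, hfu]
    · simp [SimpleGraph.Dart.ext_iff, hab]
  have hb : v ⟨(b, u), hbu⟩ = 0 := by
    rwa [hC _ (.inr hw), mul_zero, ha, zero_add, eq_comm] at hsum
  exact hC.forall_snd_eq_zero_of_pair hu hau hbu ha hb f hf

lemma forall_snd_eq_zero_of_adj (hμ : μ ≠ 0)
    (hv : v ∈ LinearMap.ker (nbMatrix G - μ • 1).mulVecLin) (hC : SupportedOn G v C)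
    {x y z : V} (hy : {w | w ∈ C ∧ G.Adj y w} = {x, z}) (hxz : x ≠ z)
    (hx : ∀ f : G.Dart, f.snd = x → v f = 0) (f : G.Dart) (hf : f.snd = y) : v f = 0 := by
  have hyx : G.Adj y x := (show x ∈ {w | w ∈ C ∧ G.Adj y w} by simp [hy]).2
  have hyz : G.Adj y z := (show z ∈ {w | w ∈ C ∧ G.Adj y w} by simp [hy]).2
  have hz : μ * v ⟨(y, x), hyx⟩ = v ⟨(z, y), hyz.symm⟩ := by
    refine (mul_apply_eq_sum_of_supportedOn hv hC ?_ ?_).trans (Finset.sum_singleton _ _)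
    · simpa using hxz.symm
    · intro f hfy hfx hfC
      have h := (f.fst_eq_or_eq_of_snd_eq hy hfy hfC).resolve_left hfx
      simp [SimpleGraph.Dart.ext_iff, Prod.ext_iff, h, hfy]
  rw [hx _ rfl, mul_zero, eq_comm] at hz
  exact hC.forall_snd_eq_zero_of_pair hy hyx.symm hyz.symm
    (apply_eq_zero_of_forall_snd_eq hμ hv hx) hz f hf

lemma eq_zero_of_apply_eq_zero (hμ : μ ≠ 0) (hcyc : InducesCycle G C)
    (hv : v ∈ LinearMap.ker (nbMatrix G - μ • 1).mulVecLin) (hC : SupportedOn G v C)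
    {u a w : V} (hu : u ∈ C) (ha : a ∈ C) (hau : G.Adj a u) (huw : G.Adj u w) (hw : w ∉ C)
    (h0 : v ⟨(a, u), hau⟩ = 0) : v = 0 := by
  obtain ⟨b, hab, hN⟩ := Set.exists_eq_pair_of_ncard_eq_two (hcyc.2 u hu) ⟨ha, hau.symm⟩
  have hbu : G.Adj b u := (show b ∈ {w | w ∈ C ∧ G.Adj u w} by simp [hN]).2.symm
  have hP : ∀ y : C, ∀ f : G.Dart, f.snd = y → v f = 0 := by
    refine hcyc.1.preconnected.forall_of_forall_adj (u := ⟨u, hu⟩) (fun x y hxy hx => ?_)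
      (forall_snd_eq_zero_of_adj_notMem hv hC hN hab hau hbu huw hw h0)
    obtain ⟨z, hxz, hy⟩ := Set.exists_eq_pair_of_ncard_eq_two (hcyc.2 y y.2) ⟨x.2, hxy.symm⟩
    exact forall_snd_eq_zero_of_adj hμ hv hC hy hxz hx
  funext f
  by_cases hf : f.snd ∈ C
  · exact hP ⟨_, hf⟩ f rfl
  · exact hC f (.inr hf)

end nbMatrix

theorem nbMatrix_unit_eigenvector_on_cycle_unique
    [DecidableEq V] [Fintype V] (G : SimpleGraph V) [DecidableRel G.Adj]
    (C : Set V) (r : ℕ) (hr : 3 ≤ r)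
    (hcyc : InducesCycle G C) (hbig : ∃ u ∈ C, 2 < G.degree u)
    (μ : ℂ) (hroot : μ ^ r = 1) :
    Module.finrank ℂ
      ↥(LinearMap.ker (nbMatrix G - μ • 1).mulVecLin ⊓ supportedSubmodule G C) ≤ 1 := by
  obtain ⟨u, hu, hdeg⟩ := hbig
  have hμ : μ ≠ 0 := (IsUnit.of_pow_eq_one hroot (by omega)).ne_zero
  obtain ⟨w, huw, hw⟩ :=
    G.exists_adj_notMem_of_ncard_lt_degree (C := C) ((hcyc.2 u hu).trans_lt hdeg)
  obtain ⟨a, haC, hua⟩ : {w | w ∈ C ∧ G.Adj u w}.Nonempty :=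
    Set.nonempty_of_ncard_ne_zero (by simp [hcyc.2 u hu])
  set S := LinearMap.ker (nbMatrix G - μ • 1).mulVecLin ⊓ supportedSubmodule G C
  let φ : S →ₗ[ℂ] ℂ := (LinearMap.proj (⟨(a, u), hua.symm⟩ : G.Dart)).comp S.subtype
  have hφ : Function.Injective φ := by
    refine (injective_iff_map_eq_zero φ).mpr fun v hv => Subtype.ext ?_
    exact nbMatrix.eq_zero_of_apply_eq_zero hμ hcyc v.2.1 v.2.2 hu haC hua.symm huw hw hv
  simpa using LinearMap.finrank_le_finrank_of_injective hφ
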